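/- arXiv:1901.00343 — 3 statements merged into one kernel-verified Lean document; each statement's English description precedes it below -/
import Mathlib

section
/- Conservation of total mass (matrix form). Let M and A be n×n real symmetric matrices, viewed as complex matrices with real entries, with M invertible, let k and ε be real numbers with ε ≠ 0, and let c_n ∈ ℂⁿ. If c_{n+1} = exp((k/(iε)) M⁻¹ A) c_n, then c_{n+1}ᴴ M c_{n+1} = c_nᴴ M c_n. -/
/-!
Since `z = k / (iε)` is purely imaginary and `M`, `A` are Hermitian, `X = z M⁻¹ A` satisfies
`Xᴴ M = -M X`, i.e. `X` is skew-adjoint for the sesquilinear form `cᴴ M c`. Hence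
`(exp X)ᴴ = exp Xᴴ = M exp (-X) M⁻¹`, so `(exp X)ᴴ M exp X = M`: the propagator preserves the form.
-/

open Matrix

theorem Matrix.star_mulVec_dotProduct_mulVec_mulVec {m R : Type*} [Fintype m] [CommSemiring R]
    [StarRing R] (B M : Matrix m m R) (c : m → R) :
    star (B *ᵥ c) ⬝ᵥ M *ᵥ (B *ᵥ c) = star c ⬝ᵥ (Bᴴ * M * B) *ᵥ c := by
  rw [star_mulVec, dotProduct_mulVec, vecMul_vecMul, ← dotProduct_mulVec, mulVec_mulVec]

section RCLike

variable {m 𝕜 : Type*} [Fintype m] [DecidableEq m] [RCLike 𝕜]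

theorem Matrix.conjTranspose_exp_mul_mul_exp {M X : Matrix m m 𝕜} (hM : IsUnit M)
    (hX : Xᴴ * M = -(M * X)) : (NormedSpace.exp X)ᴴ * M * NormedSpace.exp X = M := by
  have hdet := (isUnit_iff_isUnit_det M).mp hM
  have hXH : Xᴴ = M * (-X) * M⁻¹ := by
    rw [mul_neg, ← hX, Matrix.mul_assoc, mul_nonsing_inv _ hdet, Matrix.mul_one]
  calc (NormedSpace.exp X)ᴴ * M * NormedSpace.exp X
      = M * NormedSpace.exp (-X) * (M⁻¹ * M) * NormedSpace.exp X := by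
        rw [← exp_conjTranspose, hXH, exp_conj _ _ hM]
        simp only [Matrix.mul_assoc]
    _ = M := by
      rw [nonsing_inv_mul _ hdet, Matrix.mul_one, Matrix.mul_assoc, exp_neg,
        nonsing_inv_mul _ ((isUnit_iff_isUnit_det _).mp (isUnit_exp X)), Matrix.mul_one]

theorem Matrix.conjTranspose_smul_inv_mul_mul_eq_neg {M A : Matrix m m 𝕜} (hM : M.IsHermitian)
    (hMu : IsUnit M) (hA : A.IsHermitian) {z : 𝕜} (hz : star z = -z) :
    (z • (M⁻¹ * A))ᴴ * M = -(M * (z • (M⁻¹ * A))) := by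
  have hdet := (isUnit_iff_isUnit_det M).mp hMu
  rw [conjTranspose_smul, conjTranspose_mul, conjTranspose_nonsing_inv, hM.eq, hA.eq, hz,
    smul_mul_assoc, Matrix.mul_assoc, nonsing_inv_mul _ hdet, Matrix.mul_one, mul_smul_comm,
    ← Matrix.mul_assoc, mul_nonsing_inv _ hdet, Matrix.one_mul, neg_smul]

end RCLike

theorem Matrix.IsSymm.isHermitian_map_ofReal {m : Type*} {A : Matrix m m ℝ} (hA : A.IsSymm) :
    (A.map Complex.ofReal).IsHermitian :=
  (isHermitian_iff_isSymm.mpr hA).map _ fun x => (Complex.conj_ofReal x).symm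

theorem Complex.star_ofReal_div_I_mul_ofReal (k ε : ℝ) :
    star ((k : ℂ) / (I * ε)) = -((k : ℂ) / (I * ε)) := by
  rw [star_def, map_div₀, map_mul, conj_ofReal, conj_ofReal, conj_I, neg_mul, div_neg]

theorem mass_conservation_matrix_general {n : ℕ} (M A : Matrix (Fin n) (Fin n) ℝ)
    (hMsymm : M.IsSymm) (hAsymm : A.IsSymm) (hM : IsUnit M) (k ε : ℝ)
    (c c' : Fin n → ℂ)
    (hstep : c' = (NormedSpace.exp (((k : ℂ) / (Complex.I * (ε : ℂ))) •
        ((M.map (Complex.ofReal))⁻¹ * A.map (Complex.ofReal)))) *ᵥ c) :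
    star c' ⬝ᵥ (M.map (Complex.ofReal)) *ᵥ c' = star c ⬝ᵥ (M.map (Complex.ofReal)) *ᵥ c := by
  have hMu : IsUnit (M.map Complex.ofReal) := hM.map Complex.ofRealHom.mapMatrix
  have hskew := conjTranspose_smul_inv_mul_mul_eq_neg hMsymm.isHermitian_map_ofReal hMu
    hAsymm.isHermitian_map_ofReal (Complex.star_ofReal_div_I_mul_ofReal k ε)
  rw [hstep, star_mulVec_dotProduct_mulVec_mulVec, conjTranspose_exp_mul_mul_exp hMu hskew]

/-- **Conservation of total mass (matrix form).** Let `M` and `A` be `n × n` real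
symmetric matrices, viewed as complex matrices with real entries, with `M` invertible, let
`k, ε` be real with `ε ≠ 0`, and let `cₙ ∈ ℂⁿ`. If `cₙ₊₁ = exp ((k/(iε)) M⁻¹ A) cₙ`, then
`cₙ₊₁ᴴ M cₙ₊₁ = cₙᴴ M cₙ`. -/
theorem mass_conservation_matrix {n : ℕ} (M A : Matrix (Fin n) (Fin n) ℝ)
    (hMsymm : M.IsSymm) (hAsymm : A.IsSymm) (hM : IsUnit M) (k ε : ℝ) (hε : ε ≠ 0)
    (c c' : Fin n → ℂ)
    (hstep : c' = (NormedSpace.exp (((k : ℂ) / (Complex.I * (ε : ℂ))) •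
        ((M.map (Complex.ofReal))⁻¹ * A.map (Complex.ofReal)))) *ᵥ c) :
    star c' ⬝ᵥ (M.map (Complex.ofReal)) *ᵥ c' = star c ⬝ᵥ (M.map (Complex.ofReal)) *ᵥ c :=
  mass_conservation_matrix_general M A hMsymm hAsymm hM k ε c c' hstep
end

section
/- Conservation of total energy (matrix form). Let M and A be n×n real symmetric matrices, viewed as complex matrices with real entries, with M invertible, let k and ε be real numbers with ε ≠ 0, and let c_n ∈ ℂⁿ. If c_{n+1} = exp((k/(iε)) M⁻¹ A) c_n, then c_{n+1}ᴴ A c_{n+1} = c_nᴴ A c_n. -/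
/-!
Put `X = α • (M⁻¹ * A)` with `α = k / (iε)` purely imaginary. Since `M` and `A` are Hermitian,
`A * X = -(Xᴴ * A)`: `A` semiconjugates `X` to `-Xᴴ`, hence `exp X` to `exp (-Xᴴ)`. As
`(exp X)ᴴ = exp Xᴴ` is the inverse of `exp (-Xᴴ)`, this gives `(exp X)ᴴ * A * exp X = A`.
-/

open Matrix NormedSpace

theorem star_exp_mul_mul_exp_eq_self {𝔸 : Type*} [NormedRing 𝔸] [NormedAlgebra ℚ 𝔸]
    [CompleteSpace 𝔸] [StarRing 𝔸] [ContinuousStar 𝔸] {x a : 𝔸}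
    (h : x * a = -(star a * x)) : star (exp a) * x * exp a = x := by
  have hsemiconj : SemiconjBy x a (-star a) := by rw [SemiconjBy, h, neg_mul]
  simpa [star_exp] using hsemiconj.exp_neg_mul_mul_exp_eq_self

namespace Matrix

variable {n : Type*} [Fintype n]

theorem star_mulVec_dotProduct_mulVec_mulVec_s4 {R : Type*} [CommRing R] [StarRing R]
    (U A : Matrix n n R) (c : n → R) :
    star (U *ᵥ c) ⬝ᵥ A *ᵥ (U *ᵥ c) = star c ⬝ᵥ (Uᴴ * A * U) *ᵥ c := by
  rw [star_mulVec, dotProduct_mulVec, vecMul_vecMul, ← dotProduct_mulVec, mulVec_mulVec]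

variable [DecidableEq n]

open scoped Norms.Operator in
theorem conjTranspose_exp_mul_mul_exp_eq_self {𝔸 : Type*} [NormedRing 𝔸] [NormedAlgebra ℚ 𝔸]
    [CompleteSpace 𝔸] [StarRing 𝔸] [ContinuousStar 𝔸] {A X : Matrix n n 𝔸}
    (h : A * X = -(Xᴴ * A)) : (exp X)ᴴ * A * exp X = A :=
  -- The operator-norm topology agrees with the product topology only after unfolding instances,
  -- so these two instances are not found by unification and are passed explicitly.
  @star_exp_mul_mul_exp_eq_self (Matrix n n 𝔸) _ _ (instCompleteSpace n n 𝔸) _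
    instContinuousStarMatrix A X h

theorem mul_smul_inv_mul_eq_neg {R : Type*} [CommRing R] [StarRing R] {M A : Matrix n n R}
    (hM : M.IsHermitian) (hA : A.IsHermitian) {α : R} (hα : star α = -α) :
    A * (α • (M⁻¹ * A)) = -((α • (M⁻¹ * A))ᴴ * A) := by
  rw [conjTranspose_smul, conjTranspose_mul, conjTranspose_nonsing_inv, hM.eq, hA.eq, hα,
    neg_smul, neg_mul, neg_neg, smul_mul, Matrix.mul_smul, Matrix.mul_assoc]

end Matrix

theorem energy_conservation_matrix_general {n : ℕ} (M A : Matrix (Fin n) (Fin n) ℝ)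
    (hMsymm : M.IsSymm) (hAsymm : A.IsSymm) (k ε : ℝ)
    (c c' : Fin n → ℂ)
    (hstep : c' = (NormedSpace.exp (((k : ℂ) / (Complex.I * (ε : ℂ))) •
        ((M.map (Complex.ofReal))⁻¹ * A.map (Complex.ofReal)))) *ᵥ c) :
    star c' ⬝ᵥ (A.map (Complex.ofReal)) *ᵥ c' = star c ⬝ᵥ (A.map (Complex.ofReal)) *ᵥ c := by
  have hermitian_map {B : Matrix (Fin n) (Fin n) ℝ} (hB : B.IsSymm) :
      (B.map Complex.ofReal).IsHermitian :=
    (isHermitian_iff_isSymm.mpr hB).map _ fun x ↦ (Complex.conj_ofReal x).symm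
  have hα : star ((k : ℂ) / (Complex.I * ε)) = -((k : ℂ) / (Complex.I * ε)) := by
    simp [div_neg]
  rw [hstep, star_mulVec_dotProduct_mulVec_mulVec_s4, conjTranspose_exp_mul_mul_exp_eq_self
    (mul_smul_inv_mul_eq_neg (hermitian_map hMsymm) (hermitian_map hAsymm) hα)]

/-- **Conservation of total energy (matrix form).** Let `M` and `A` be `n × n` real
symmetric matrices, viewed as complex matrices with real entries, with `M` invertible, let
`k, ε` be real with `ε ≠ 0`, and let `cₙ ∈ ℂⁿ`. If `cₙ₊₁ = exp ((k/(iε)) M⁻¹ A) cₙ`, then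
`cₙ₊₁ᴴ A cₙ₊₁ = cₙᴴ A cₙ`. -/
theorem energy_conservation_matrix {n : ℕ} (M A : Matrix (Fin n) (Fin n) ℝ)
    (hMsymm : M.IsSymm) (hAsymm : A.IsSymm) (hM : IsUnit M) (k ε : ℝ) (hε : ε ≠ 0)
    (c c' : Fin n → ℂ)
    (hstep : c' = (NormedSpace.exp (((k : ℂ) / (Complex.I * (ε : ℂ))) •
        ((M.map (Complex.ofReal))⁻¹ * A.map (Complex.ofReal)))) *ᵥ c) :
    star c' ⬝ᵥ (A.map (Complex.ofReal)) *ᵥ c' = star c ⬝ᵥ (A.map (Complex.ofReal)) *ᵥ c :=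
  energy_conservation_matrix_general M A hMsymm hAsymm k ε c c' hstep
end

section
/- Continuous-in-time conservation of total mass. Let M and A be n×n real symmetric matrices, viewed as complex matrices with real entries, with M invertible, let ε be a nonzero real number, and let c : ℝ → ℂⁿ be differentiable with c'(t) = (1/(iε)) M⁻¹ A c(t) for all t. Then the function t ↦ c(t)ᴴ M c(t) is constant. -/
/-!
Along c' = B c the derivative of cᴴ M c is cᴴ (Bᴴ M + M B) c. For B = k • M⁻¹ A with M, A
Hermitian and M invertible, Bᴴ M + M B = (conj k + k) • A, which vanishes because
k = 1 / (iε) is purely imaginary.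
-/

open Matrix

section
variable {ι 𝕜 : Type*} [Fintype ι] [RCLike 𝕜]

theorem HasDerivAt.star_dotProduct_mulVec {c : ℝ → ι → 𝕜} {v : ι → 𝕜} {t : ℝ}
    (M : Matrix ι ι 𝕜) (hc : HasDerivAt c v t) :
    HasDerivAt (fun t => star (c t) ⬝ᵥ M *ᵥ c t)
      (star v ⬝ᵥ M *ᵥ c t + star (c t) ⬝ᵥ M *ᵥ v) t := by
  have hci : ∀ i, HasDerivAt (fun t => c t i) (v i) t := hasDerivAt_pi.mp hc
  have hMc : HasDerivAt (fun t => M *ᵥ c t) (M *ᵥ v) t :=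
    ((M.mulVecLin.restrictScalars ℝ).toContinuousLinearMap.hasFDerivAt).comp_hasDerivAt t hc
  have hMci : ∀ i, HasDerivAt (fun t => (M *ᵥ c t) i) ((M *ᵥ v) i) t := hasDerivAt_pi.mp hMc
  simpa only [dotProduct, Pi.star_apply, Pi.mul_apply, ← Finset.sum_add_distrib] using
    HasDerivAt.fun_sum fun i _ => (hci i).star.mul (hMci i)

theorem star_dotProduct_mulVec_eq_of_hasDerivAt {c : ℝ → ι → 𝕜} (M B : Matrix ι ι 𝕜)
    (hB : Bᴴ * M + M * B = 0) (hc : ∀ t, HasDerivAt c (B *ᵥ c t) t) (s t : ℝ) :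
    star (c s) ⬝ᵥ M *ᵥ c s = star (c t) ⬝ᵥ M *ᵥ c t := by
  have hderiv : ∀ t, HasDerivAt (fun t => star (c t) ⬝ᵥ M *ᵥ c t) 0 t := by
    intro t
    convert (hc t).star_dotProduct_mulVec M using 1
    rw [← dotProduct_zero (star (c t)), ← zero_mulVec (c t), ← hB, add_mulVec, dotProduct_add,
      ← mulVec_mulVec, ← mulVec_mulVec, dotProduct_mulVec (star (c t)) Bᴴ, ← star_mulVec]
  exact is_const_of_deriv_eq_zero (fun t => (hderiv t).differentiableAt)
    (fun t => (hderiv t).deriv) s t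

theorem Matrix.IsHermitian.conjTranspose_mul_add_mul_smul_inv_mul_eq_zero [DecidableEq ι]
    {M A : Matrix ι ι 𝕜} (hM : M.IsHermitian) (hA : A.IsHermitian) (hdet : IsUnit M.det)
    {k : 𝕜} (hk : star k = -k) :
    (k • (M⁻¹ * A))ᴴ * M + M * (k • (M⁻¹ * A)) = 0 := by
  rw [conjTranspose_smul, conjTranspose_mul, conjTranspose_nonsing_inv, hA.eq, hM.eq, hk,
    Matrix.smul_mul, Matrix.mul_smul, Matrix.mul_assoc, nonsing_inv_mul M hdet, Matrix.mul_one,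
    ← Matrix.mul_assoc, mul_nonsing_inv M hdet, Matrix.one_mul, neg_smul, neg_add_cancel]

end

theorem Matrix.IsSymm.isHermitian_map_ofReal_s7 {ι : Type*} {M : Matrix ι ι ℝ} (h : M.IsSymm) :
    (M.map Complex.ofReal).IsHermitian :=
  (isHermitian_iff_isSymm.mpr h).map _ fun x => (Complex.conj_ofReal x).symm

theorem mass_conservation_continuous_general {n : ℕ} (M A : Matrix (Fin n) (Fin n) ℝ)
    (hMsymm : M.IsSymm) (hAsymm : A.IsSymm) (hM : IsUnit M) (ε : ℝ)
    (c : ℝ → Fin n → ℂ)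
    (hc : ∀ t : ℝ, HasDerivAt c (((1 : ℂ) / (Complex.I * (ε : ℂ))) •
        (((M.map (Complex.ofReal))⁻¹ * A.map (Complex.ofReal)) *ᵥ c t)) t) :
    ∀ s t : ℝ,
      star (c s) ⬝ᵥ (M.map (Complex.ofReal)) *ᵥ c s =
        star (c t) ⬝ᵥ (M.map (Complex.ofReal)) *ᵥ c t := by
  have hdet : IsUnit (M.map Complex.ofReal).det := by
    rw [← isUnit_iff_isUnit_det]
    exact hM.map Complex.ofRealHom.mapMatrix
  have hk : star ((1 : ℂ) / (Complex.I * ε)) = -(1 / (Complex.I * ε)) := by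
    simp [div_eq_mul_inv, mul_comm]
  exact star_dotProduct_mulVec_eq_of_hasDerivAt _ _
    (hMsymm.isHermitian_map_ofReal_s7.conjTranspose_mul_add_mul_smul_inv_mul_eq_zero
      hAsymm.isHermitian_map_ofReal_s7 hdet hk)
    (by simpa only [smul_mulVec] using hc)

/-- **Continuous-in-time conservation of total mass.** Let `M, A` be `n × n` real
symmetric matrices (viewed as complex), `M` invertible, `ε ≠ 0`, and let `c : ℝ → ℂⁿ` be
differentiable with `c'(t) = (1/(iε)) M⁻¹ A c(t)` for all `t`. Then `t ↦ c(t)ᴴ M c(t)` is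
constant. -/
theorem mass_conservation_continuous {n : ℕ} (M A : Matrix (Fin n) (Fin n) ℝ)
    (hMsymm : M.IsSymm) (hAsymm : A.IsSymm) (hM : IsUnit M) (ε : ℝ) (hε : ε ≠ 0)
    (c : ℝ → Fin n → ℂ)
    (hc : ∀ t : ℝ, HasDerivAt c (((1 : ℂ) / (Complex.I * (ε : ℂ))) •
        (((M.map (Complex.ofReal))⁻¹ * A.map (Complex.ofReal)) *ᵥ c t)) t) :
    ∀ s t : ℝ,
      star (c s) ⬝ᵥ (M.map (Complex.ofReal)) *ᵥ c s =
        star (c t) ⬝ᵥ (M.map (Complex.ofReal)) *ᵥ c t :=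
  mass_conservation_continuous_general M A hMsymm hAsymm hM ε c hc
end
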